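/- arXiv:2502.13378 — 3 statements merged into one kernel-verified Lean document; each statement's English description precedes it below -/
import Mathlib

section
/- The double integral for the Brownian coagulation kernel in the free molecule regime satisfies ∫₀^∞ ∫₀^∞ (1/η + 1/η₁)^{1/2} (η^{1/3} + η₁^{1/3})² e^{-η-η₁} dη dη₁ = 2·Γ(13/6)·(Γ(7/6)·Γ(1/2) + Γ(5/6)²)/Γ(5/3), where Γ is the Euler Gamma function. -/
/-!
Since `(1/η + 1/η₁)^{1/2} = (η + η₁)^{1/2} (η η₁)^{-1/2}`, expanding the square splits the integrand
into three terms of the form `(x + y)^s x^{p-1} y^{q-1} e^{-x-y}`. Each double integral is computed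
by substituting `x = t y` (Jacobian `y`) and integrating out `y` first, which is a Gamma integral:
this leaves `Γ(s+p+q) ∫₀^∞ t^{p-1} (1+t)^{-(p+q)} dt`. For `s = 0` the double integral factors as
`Γ(p) Γ(q)`, which evaluates this Beta integral and proves its convergence, so
`∫∫ (x + y)^s x^{p-1} y^{q-1} e^{-x-y} = Γ(s+p+q) Γ(p) Γ(q) / Γ(p+q)`.
-/

open MeasureTheory Set Real

local notation "μ₊" =>
  Measure.prod (Measure.restrict (volume : Measure ℝ) (Ioi 0))
    (Measure.restrict (volume : Measure ℝ) (Ioi 0))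

section Shear

variable {E : Type*} [NormedAddCommGroup E] [NormedSpace ℝ E] {f : ℝ × ℝ → E}

theorem integrable_shear_iff (hf : StronglyMeasurable f) :
    Integrable (fun z : ℝ × ℝ => z.2 • f (z.1 * z.2, z.2)) μ₊ ↔ Integrable f μ₊ := by
  have hg : StronglyMeasurable (fun z : ℝ × ℝ => z.2 • f (z.1 * z.2, z.2)) :=
    measurable_snd.stronglyMeasurable.smul (hf.comp_measurable (by fun_prop))
  rw [integrable_prod_iff' hg.aestronglyMeasurable, integrable_prod_iff' hf.aestronglyMeasurable]
  have hsection : ∀ y : ℝ, 0 < y → (IntegrableOn (fun t => y • f (t * y, y)) (Ioi 0)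
      ↔ IntegrableOn (fun x => f (x, y)) (Ioi 0)) := fun y hy => by
    rw [show (fun t => y • f (t * y, y)) = y • fun t => f (t * y, y) from rfl, IntegrableOn,
      integrable_smul_iff hy.ne' (fun t => f (t * y, y))]
    have h := integrableOn_Ioi_comp_mul_right_iff (fun x => f (x, y)) 0 hy
    rwa [zero_mul] at h
  refine and_congr ⟨fun h => ?_, fun h => ?_⟩ (integrable_congr ?_)
  · filter_upwards [h, ae_restrict_mem measurableSet_Ioi] with y hy hy0
    exact (hsection y hy0).1 hy
  · filter_upwards [h, ae_restrict_mem measurableSet_Ioi] with y hy hy0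
    exact (hsection y hy0).2 hy
  · filter_upwards [ae_restrict_mem measurableSet_Ioi] with y (hy : 0 < y)
    simp only [norm_smul, norm_of_nonneg hy.le, integral_const_mul]
    rw [integral_comp_mul_right_Ioi (fun x => ‖f (x, y)‖) 0 hy, zero_mul, smul_eq_mul,
      mul_inv_cancel_left₀ hy.ne']

theorem integral_shear (hf : StronglyMeasurable f) :
    ∫ z, z.2 • f (z.1 * z.2, z.2) ∂μ₊ = ∫ z, f z ∂μ₊ := by
  by_cases h : Integrable f μ₊
  · rw [integral_prod_symm _ h, integral_prod_symm _ ((integrable_shear_iff hf).2 h)]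
    refine setIntegral_congr_fun measurableSet_Ioi fun y (hy : 0 < y) => ?_
    rw [integral_smul, integral_comp_mul_right_Ioi (fun x => f (x, y)) 0 hy, zero_mul, smul_smul,
      mul_inv_cancel₀ hy.ne', one_smul]
  · rw [integral_undef h, integral_undef (mt (integrable_shear_iff hf).1 h)]

end Shear

/-- Up to normalisation, the density of a pair of independent `Γ(p)`, `Γ(q)` variables weighted by
`(x + y) ^ s`. -/
noncomputable def gammaMomentIntegrand (s p q : ℝ) (z : ℝ × ℝ) : ℝ :=
  (z.1 + z.2) ^ s * z.1 ^ (p - 1) * z.2 ^ (q - 1) * exp (-(z.1 + z.2))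

section GammaMoment

variable {s p q : ℝ}

theorem measurable_gammaMomentIntegrand : Measurable (gammaMomentIntegrand s p q) := by
  unfold gammaMomentIntegrand
  fun_prop

theorem gammaMomentIntegrand_nonneg {z : ℝ × ℝ} (hx : 0 < z.1) (hy : 0 < z.2) :
    0 ≤ gammaMomentIntegrand s p q z := by
  unfold gammaMomentIntegrand
  positivity

theorem smul_gammaMomentIntegrand_shear {t y : ℝ} (ht : 0 < t) (hy : 0 < y) :
    y • gammaMomentIntegrand s p q (t * y, y)
      = t ^ (p - 1) * (1 + t) ^ s * (y ^ (s + p + q - 1) * exp (-((1 + t) * y))) := by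
  have h1t : 0 < 1 + t := by linarith
  simp only [gammaMomentIntegrand, smul_eq_mul]
  rw [show t * y + y = (1 + t) * y by ring, mul_rpow h1t.le hy.le, mul_rpow ht.le hy.le,
    show s + p + q - 1 = 1 + s + (p - 1) + (q - 1) by ring, rpow_add hy, rpow_add hy,
    rpow_add hy, rpow_one]
  ring

theorem integrableOn_gammaMomentIntegrand_shear (hr : 0 < s + p + q) {t : ℝ} (ht : 0 < t) :
    IntegrableOn (fun y => y • gammaMomentIntegrand s p q (t * y, y)) (Ioi 0) := by
  have hgamma :
      IntegrableOn (fun y : ℝ => y ^ (s + p + q - 1) * exp (-((1 + t) * y))) (Ioi 0) := by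
    simpa only [rpow_one, neg_mul] using
      integrableOn_rpow_mul_exp_neg_mul_rpow (by linarith : -1 < s + p + q - 1) one_pos
        (by linarith : 0 < 1 + t)
  exact IntegrableOn.congr_fun (hgamma.const_mul (t ^ (p - 1) * (1 + t) ^ s))
    (fun y (hy : 0 < y) => (smul_gammaMomentIntegrand_shear ht hy).symm) measurableSet_Ioi

theorem integral_gammaMomentIntegrand_shear (hr : 0 < s + p + q) {t : ℝ} (ht : 0 < t) :
    ∫ y in Ioi 0, y • gammaMomentIntegrand s p q (t * y, y)
      = Gamma (s + p + q) * (t ^ (p - 1) * (1 + t) ^ (-(p + q))) := by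
  have h1t : 0 < 1 + t := by linarith
  rw [setIntegral_congr_fun measurableSet_Ioi
      (fun y (hy : 0 < y) => smul_gammaMomentIntegrand_shear ht hy),
    integral_const_mul, integral_rpow_mul_exp_neg_mul_Ioi hr h1t, one_div, inv_rpow h1t.le,
    ← rpow_neg h1t.le, show -(p + q) = s + -(s + p + q) by ring, rpow_add h1t]
  ring

theorem integrable_gammaMomentIntegrand_iff (hr : 0 < s + p + q) :
    Integrable (gammaMomentIntegrand s p q) μ₊
      ↔ IntegrableOn (fun t : ℝ => t ^ (p - 1) * (1 + t) ^ (-(p + q))) (Ioi 0) := by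
  have hmeas := measurable_gammaMomentIntegrand (s := s) (p := p) (q := q)
  rw [← integrable_shear_iff hmeas.stronglyMeasurable,
    integrable_prod_iff (by fun_prop : Measurable fun z : ℝ × ℝ =>
      z.2 • gammaMomentIntegrand s p q (z.1 * z.2, z.2)).aestronglyMeasurable]
  have hsections : ∀ᵐ t ∂(volume.restrict (Ioi 0)),
      IntegrableOn (fun y => y • gammaMomentIntegrand s p q (t * y, y)) (Ioi 0) := by
    filter_upwards [ae_restrict_mem measurableSet_Ioi] with t ht
    exact integrableOn_gammaMomentIntegrand_shear hr ht
  have hnorms : (fun t => ∫ y in Ioi 0, ‖y • gammaMomentIntegrand s p q (t * y, y)‖)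
      =ᵐ[volume.restrict (Ioi 0)]
        fun t => Gamma (s + p + q) * (t ^ (p - 1) * (1 + t) ^ (-(p + q))) := by
    filter_upwards [ae_restrict_mem measurableSet_Ioi] with t (ht : 0 < t)
    rw [← integral_gammaMomentIntegrand_shear hr ht]
    refine setIntegral_congr_fun measurableSet_Ioi fun y (hy : 0 < y) => norm_of_nonneg ?_
    exact smul_nonneg hy.le (gammaMomentIntegrand_nonneg (mul_pos ht hy) hy)
  rw [integrable_congr hnorms, integrable_const_mul_iff (Gamma_pos_of_pos hr).ne'.isUnit]
  exact and_iff_right hsections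

theorem integral_gammaMomentIntegrand_eq_mul_integral (hr : 0 < s + p + q) :
    ∫ z, gammaMomentIntegrand s p q z ∂μ₊
      = Gamma (s + p + q) * ∫ t in Ioi 0, t ^ (p - 1) * (1 + t) ^ (-(p + q)) := by
  have hmeas := measurable_gammaMomentIntegrand (s := s) (p := p) (q := q)
  rw [← integral_shear hmeas.stronglyMeasurable]
  by_cases h : Integrable (gammaMomentIntegrand s p q) μ₊
  · rw [integral_prod _ ((integrable_shear_iff hmeas.stronglyMeasurable).2 h),
      ← integral_const_mul]
    exact setIntegral_congr_fun measurableSet_Ioi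
      fun t (ht : 0 < t) => integral_gammaMomentIntegrand_shear hr ht
  · rw [integral_undef (mt (integrable_shear_iff hmeas.stronglyMeasurable).1 h), integral_undef,
      mul_zero]
    rwa [integrable_gammaMomentIntegrand_iff hr] at h

theorem gammaMomentIntegrand_zero :
    gammaMomentIntegrand 0 p q
      = fun z => (exp (-z.1) * z.1 ^ (p - 1)) * (exp (-z.2) * z.2 ^ (q - 1)) := by
  ext z
  simp only [gammaMomentIntegrand, rpow_zero, one_mul, neg_add, exp_add]
  ring

theorem integrable_gammaMomentIntegrand_zero (hp : 0 < p) (hq : 0 < q) :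
    Integrable (gammaMomentIntegrand 0 p q) μ₊ := by
  rw [gammaMomentIntegrand_zero]
  exact (GammaIntegral_convergent hp).mul_prod (GammaIntegral_convergent hq)

theorem integral_gammaMomentIntegrand_zero (hp : 0 < p) (hq : 0 < q) :
    ∫ z, gammaMomentIntegrand 0 p q z ∂μ₊ = Gamma p * Gamma q := by
  rw [gammaMomentIntegrand_zero, Gamma_eq_integral hp, Gamma_eq_integral hq]
  exact integral_prod_mul (fun x => exp (-x) * x ^ (p - 1)) (fun y => exp (-y) * y ^ (q - 1))

theorem integrableOn_rpow_mul_one_add_rpow_neg (hp : 0 < p) (hq : 0 < q) :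
    IntegrableOn (fun t : ℝ => t ^ (p - 1) * (1 + t) ^ (-(p + q))) (Ioi 0) :=
  (integrable_gammaMomentIntegrand_iff (by linarith)).1
    (integrable_gammaMomentIntegrand_zero hp hq)

theorem integral_rpow_mul_one_add_rpow_neg (hp : 0 < p) (hq : 0 < q) :
    ∫ t in Ioi 0, t ^ (p - 1) * (1 + t) ^ (-(p + q)) = Gamma p * Gamma q / Gamma (p + q) := by
  have h := integral_gammaMomentIntegrand_eq_mul_integral (s := 0) (p := p) (q := q) (by linarith)
  rw [integral_gammaMomentIntegrand_zero hp hq, zero_add] at h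
  rw [h, mul_div_cancel_left₀ _ (Gamma_pos_of_pos (add_pos hp hq)).ne']

@[fun_prop]
theorem integrable_gammaMomentIntegrand (hp : 0 < p) (hq : 0 < q) (hr : 0 < s + p + q) :
    Integrable (gammaMomentIntegrand s p q) μ₊ :=
  (integrable_gammaMomentIntegrand_iff hr).2 (integrableOn_rpow_mul_one_add_rpow_neg hp hq)

theorem integral_gammaMomentIntegrand (hp : 0 < p) (hq : 0 < q) (hr : 0 < s + p + q) :
    ∫ z, gammaMomentIntegrand s p q z ∂μ₊
      = Gamma (s + p + q) * Gamma p * Gamma q / Gamma (p + q) := by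
  rw [integral_gammaMomentIntegrand_eq_mul_integral hr, integral_rpow_mul_one_add_rpow_neg hp hq]
  ring

end GammaMoment

noncomputable def freeMoleculeKernel (η η₁ : ℝ) : ℝ :=
  (1 / η + 1 / η₁) ^ (1 / 2 : ℝ) * (η ^ (1 / 3 : ℝ) + η₁ ^ (1 / 3 : ℝ)) ^ 2

theorem freeMoleculeKernel_mul_exp {η η₁ : ℝ} (hη : 0 < η) (hη₁ : 0 < η₁) :
    freeMoleculeKernel η η₁ * exp (-η - η₁)
      = gammaMomentIntegrand (1 / 2) (1 / 2) (7 / 6) (η₁, η)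
        + 2 * gammaMomentIntegrand (1 / 2) (5 / 6) (5 / 6) (η₁, η)
        + gammaMomentIntegrand (1 / 2) (7 / 6) (1 / 2) (η₁, η) := by
  have hsum : 1 / η + 1 / η₁ = (η₁ + η) * η₁⁻¹ * η⁻¹ := by field_simp
  simp only [freeMoleculeKernel, gammaMomentIntegrand]
  rw [hsum, mul_rpow (by positivity) (by positivity), mul_rpow (by positivity) (by positivity),
    inv_rpow hη₁.le, inv_rpow hη.le, ← rpow_neg hη₁.le, ← rpow_neg hη.le,
    show -η - η₁ = -(η₁ + η) by ring,
    show (1 / 2 - 1 : ℝ) = -(1 / 2) by norm_num,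
    show (5 / 6 - 1 : ℝ) = -(1 / 2) + 1 / 3 by norm_num,
    show (7 / 6 - 1 : ℝ) = -(1 / 2) + 1 / 3 + 1 / 3 by norm_num]
  simp only [rpow_add hη, rpow_add hη₁]
  ring

theorem freeMoleculeKernel_mul_exp_ae_eq :
    (fun z : ℝ × ℝ => freeMoleculeKernel z.2 z.1 * exp (-z.2 - z.1))
      =ᵐ[μ₊] fun z => gammaMomentIntegrand (1 / 2) (1 / 2) (7 / 6) z
        + 2 * gammaMomentIntegrand (1 / 2) (5 / 6) (5 / 6) z
        + gammaMomentIntegrand (1 / 2) (7 / 6) (1 / 2) z := by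
  rw [Measure.prod_restrict, Filter.EventuallyEq,
    ae_restrict_iff' (measurableSet_Ioi.prod measurableSet_Ioi)]
  exact Filter.Eventually.of_forall fun z ⟨hx, hy⟩ => freeMoleculeKernel_mul_exp hy hx

theorem integrable_freeMoleculeKernel_mul_exp :
    Integrable (fun z : ℝ × ℝ => freeMoleculeKernel z.2 z.1 * exp (-z.2 - z.1)) μ₊ := by
  refine Integrable.congr ?_ freeMoleculeKernel_mul_exp_ae_eq.symm
  fun_prop (disch := norm_num)

theorem integral_freeMoleculeKernel_mul_exp :
    ∫ z, freeMoleculeKernel z.2 z.1 * exp (-z.2 - z.1) ∂μ₊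
      = 2 * Gamma (13 / 6)
        * ((Gamma (7 / 6) * Gamma (1 / 2) + Gamma (5 / 6) ^ 2) / Gamma (5 / 3)) := by
  rw [integral_congr_ae freeMoleculeKernel_mul_exp_ae_eq, integral_add, integral_add,
    integral_const_mul, integral_gammaMomentIntegrand, integral_gammaMomentIntegrand,
    integral_gammaMomentIntegrand]
  · norm_num
    ring
  all_goals first | fun_prop (disch := norm_num) | norm_num

/-- Double integral of the free-molecule-regime Brownian coagulation kernel:
`∫₀^∞∫₀^∞ (1/η + 1/η₁)^{1/2} (η^{1/3}+η₁^{1/3})² e^{-η-η₁} dη dη₁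
  = 2Γ(13/6)(Γ(7/6)Γ(1/2)+Γ(5/6)²)/Γ(5/3)`. -/
theorem stmt_5 :
    (∫ η₁ in Ioi (0:ℝ), ∫ η in Ioi (0:ℝ),
        (1/η + 1/η₁) ^ (1/2 : ℝ) * (η ^ (1/3 : ℝ) + η₁ ^ (1/3 : ℝ)) ^ 2 *
          Real.exp (-η - η₁))
      = 2 * Real.Gamma (13/6) *
          ((Real.Gamma (7/6) * Real.Gamma (1/2) + Real.Gamma (5/6) ^ 2) /
            Real.Gamma (5/3)) :=
  (integral_prod _ integrable_freeMoleculeKernel_mul_exp).symm.trans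
    integral_freeMoleculeKernel_mul_exp
end

section
/- The double integral for the sedimentary coagulation kernel has the closed form ∫₀^∞ ∫₀^∞ (η^{1/3} + η₁^{1/3})³ |η^{1/3} − η₁^{1/3}| e^{-η-η₁} dη dη₁ = 6·Γ(10/3) · ∫₀¹ t²(1−t) / ((1 − t + t²)³ (1 + t³)^{1/3}) dt, where Γ is the Euler Gamma function. -/
/-!
The kernel is homogeneous of degree `4/3`, so the substitution `η = η₁ σ` followed by Fubini
integrates out `η₁` as a Gamma integral, leaving `Γ(10/3) ∫₀^∞ β(σ, 1) (1 + σ)^(-10/3) dσ`.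
After `σ = x³` the integrand `3x² (x+1)³ |x-1| / (1+x³)^(10/3)` is invariant under
`x ↦ 1/x` (Jacobian included), so the integral over `(0, ∞)` is twice the one over `(0, 1]`,
where `1 + x³ = (1 + x)(1 - x + x²)` cancels the factor `(x + 1)³`.
-/

open MeasureTheory Set Real

lemma integral_Ioi_rpow_mul_exp_neg_mul_mul {a r : ℝ} (ha : 0 < a) (hr : 0 < r) (c : ℝ) :
    ∫ y in Ioi (0:ℝ), y ^ (a - 1) * exp (-(r * y)) * c = Gamma a * (c / r ^ a) := by
  rw [integral_mul_const, integral_rpow_mul_exp_neg_mul_Ioi ha hr, div_rpow zero_le_one hr.le,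
    one_rpow]
  field_simp

lemma integrable_rpow_mul_exp_neg_mul_prod_Ioi {k : ℝ → ℝ} {a : ℝ} (ha : 0 < a)
    (hk : Measurable k) (hint : IntegrableOn (fun σ => k σ / (1 + σ) ^ a) (Ioi 0)) :
    Integrable (fun p : ℝ × ℝ => p.1 ^ (a - 1) * exp (-((1 + p.2) * p.1)) * k p.2)
      ((volume.restrict (Ioi 0)).prod (volume.restrict (Ioi 0))) := by
  have hmeas :
      Measurable fun p : ℝ × ℝ => p.1 ^ (a - 1) * exp (-((1 + p.2) * p.1)) * k p.2 := by
    have : Measurable fun p : ℝ × ℝ => k p.2 := hk.comp measurable_snd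
    fun_prop
  refine (integrable_prod_iff' hmeas.aestronglyMeasurable).mpr ⟨?_, ?_⟩
  · filter_upwards [ae_restrict_mem measurableSet_Ioi] with σ hσ
    have := integrableOn_rpow_mul_exp_neg_mul_rpow (s := a - 1) (p := 1) (by linarith)
      one_pos (show 0 < 1 + σ by linarith [mem_Ioi.mp hσ])
    simp only [rpow_one, neg_mul] at this
    exact this.mul_const (k σ)
  · refine IntegrableOn.congr_fun (hint.norm.const_mul (Gamma a)) (fun σ hσ => ?_)
      measurableSet_Ioi
    have h1σ : 0 < 1 + σ := by linarith [mem_Ioi.mp hσ]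
    rw [norm_div, norm_of_nonneg (rpow_pos_of_pos h1σ _).le,
      ← integral_Ioi_rpow_mul_exp_neg_mul_mul ha h1σ]
    refine setIntegral_congr_fun measurableSet_Ioi (fun y hy => ?_)
    have hy : 0 < y := hy
    rw [norm_mul, norm_of_nonneg (by positivity : 0 ≤ y ^ (a - 1) * exp (-((1 + σ) * y)))]

theorem integral_Ioi_Ioi_mul_exp_of_homogeneous {K : ℝ → ℝ → ℝ} {d : ℝ} (hd : -2 < d)
    (hK : ∀ c > 0, ∀ x > 0, ∀ y > 0, K (c * x) (c * y) = c ^ d * K x y)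
    (hmeas : Measurable fun σ => K σ 1)
    (hint : IntegrableOn (fun σ => K σ 1 / (1 + σ) ^ (d + 2)) (Ioi 0)) :
    ∫ y in Ioi (0:ℝ), ∫ x in Ioi (0:ℝ), K x y * exp (-x - y) =
      Gamma (d + 2) * ∫ σ in Ioi (0:ℝ), K σ 1 / (1 + σ) ^ (d + 2) := by
  have hd2 : 0 < d + 2 := by linarith
  set G : ℝ → ℝ → ℝ := fun y σ => y ^ (d + 2 - 1) * exp (-((1 + σ) * y)) * K σ 1
  have hsubst :
      ∀ y > 0, ∫ x in Ioi (0:ℝ), K x y * exp (-x - y) = ∫ σ in Ioi (0:ℝ), G y σ := by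
    intro y hy
    have hscale : ∀ σ ∈ Ioi (0:ℝ), G y σ = y * (K (y * σ) y * exp (-(y * σ) - y)) := by
      intro σ hσ
      have hhom := hK y hy σ hσ 1 one_pos
      rw [mul_one] at hhom
      dsimp only [G]
      rw [hhom, show d + 2 - 1 = d + 1 by ring, rpow_add_one hy.ne']
      ring_nf
    rw [setIntegral_congr_fun measurableSet_Ioi hscale, integral_const_mul,
      integral_comp_mul_left_Ioi (fun x => K x y * exp (-x - y)) 0 hy, mul_zero, smul_eq_mul,
      mul_inv_cancel_left₀ hy.ne']
  calc ∫ y in Ioi (0:ℝ), ∫ x in Ioi (0:ℝ), K x y * exp (-x - y)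
      = ∫ y in Ioi (0:ℝ), ∫ σ in Ioi (0:ℝ), G y σ :=
        setIntegral_congr_fun measurableSet_Ioi hsubst
    _ = ∫ σ in Ioi (0:ℝ), ∫ y in Ioi (0:ℝ), G y σ :=
        integral_integral_swap (integrable_rpow_mul_exp_neg_mul_prod_Ioi hd2 hmeas hint)
    _ = ∫ σ in Ioi (0:ℝ), Gamma (d + 2) * (K σ 1 / (1 + σ) ^ (d + 2)) :=
        setIntegral_congr_fun measurableSet_Ioi fun σ hσ =>
          integral_Ioi_rpow_mul_exp_neg_mul_mul hd2 (by linarith [mem_Ioi.mp hσ]) _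
    _ = Gamma (d + 2) * ∫ σ in Ioi (0:ℝ), K σ 1 / (1 + σ) ^ (d + 2) := integral_const_mul _ _

lemma integrableOn_Ioi_one_and_setIntegral_eq_of_inv_symm {f : ℝ → ℝ}
    (hf : IntegrableOn f (Ioc 0 1)) (hsymm : ∀ x ∈ Ioo (0:ℝ) 1, (x ^ 2)⁻¹ * f x⁻¹ = f x) :
    IntegrableOn f (Ioi 1) ∧ ∫ x in Ioi 1, f x = ∫ x in Ioc 0 1, f x := by
  have himage : (fun x : ℝ => x⁻¹) '' Ioo 0 1 = Ioi 1 := by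
    ext y
    refine ⟨fun ⟨x, ⟨hx0, hx1⟩, hxy⟩ => hxy ▸ (one_lt_inv₀ hx0).mpr hx1, fun hy => ?_⟩
    have hy : 1 < y := hy
    exact ⟨y⁻¹, ⟨inv_pos.mpr (by linarith), inv_lt_one_of_one_lt₀ hy⟩, inv_inv y⟩
  have hderiv :
      ∀ x ∈ Ioo (0:ℝ) 1, HasDerivWithinAt (fun y : ℝ => y⁻¹) (-(x ^ 2)⁻¹) (Ioo 0 1) x :=
    fun x hx => (hasDerivAt_inv hx.1.ne').hasDerivWithinAt
  have hinj : InjOn (fun y : ℝ => y⁻¹) (Ioo 0 1) := inv_injective.injOn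
  have hpull : EqOn (fun x => |-(x ^ 2)⁻¹| • f x⁻¹) f (Ioo 0 1) := fun x hx => by
    dsimp only
    rw [abs_neg, abs_of_pos (by have := hx.1; positivity), smul_eq_mul, hsymm x hx]
  refine ⟨?_, ?_⟩
  · rw [← himage,
      integrableOn_image_iff_integrableOn_abs_deriv_smul measurableSet_Ioo hderiv hinj]
    exact (hf.mono_set Ioo_subset_Ioc_self).congr_fun hpull.symm measurableSet_Ioo
  · rw [← himage, integral_image_eq_integral_abs_deriv_smul measurableSet_Ioo hderiv hinj,
      setIntegral_congr_fun measurableSet_Ioo hpull, integral_Ioc_eq_integral_Ioo]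

lemma integrableOn_Ioi_and_integral_eq_two_mul_of_inv_symm {f : ℝ → ℝ}
    (hf : IntegrableOn f (Ioc 0 1)) (hsymm : ∀ x ∈ Ioo (0:ℝ) 1, (x ^ 2)⁻¹ * f x⁻¹ = f x) :
    IntegrableOn f (Ioi 0) ∧ ∫ x in Ioi 0, f x = 2 * ∫ x in Ioc 0 1, f x := by
  obtain ⟨hf', hflip⟩ := integrableOn_Ioi_one_and_setIntegral_eq_of_inv_symm hf hsymm
  rw [← Ioc_union_Ioi_eq_Ioi zero_le_one, integrableOn_union,
    setIntegral_union (Ioc_disjoint_Ioi le_rfl) measurableSet_Ioi hf hf', hflip]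
  exact ⟨⟨hf, hf'⟩, by ring⟩

noncomputable def sedimentaryKernel (x y : ℝ) : ℝ :=
  (x ^ (1/3 : ℝ) + y ^ (1/3 : ℝ)) ^ 3 * |x ^ (1/3 : ℝ) - y ^ (1/3 : ℝ)|

lemma rpow_one_third_pow_four {x : ℝ} (hx : 0 ≤ x) : (x ^ (1/3 : ℝ)) ^ 4 = x ^ (4/3 : ℝ) := by
  rw [← rpow_natCast, ← rpow_mul hx]
  norm_num

lemma sedimentaryKernel_mul_mul {c x y : ℝ} (hc : 0 ≤ c) (hx : 0 ≤ x) (hy : 0 ≤ y) :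
    sedimentaryKernel (c * x) (c * y) = c ^ (4/3 : ℝ) * sedimentaryKernel x y := by
  unfold sedimentaryKernel
  rw [mul_rpow hc hx, mul_rpow hc hy, ← mul_add, ← mul_sub, abs_mul,
    abs_of_nonneg (rpow_nonneg hc _), ← rpow_one_third_pow_four hc]
  ring

lemma sedimentaryKernel_pow_three_one {x : ℝ} (hx : 0 ≤ x) :
    sedimentaryKernel (x ^ 3) 1 = (x + 1) ^ 3 * |x - 1| := by
  rw [sedimentaryKernel, one_rpow, ← rpow_natCast x, ← rpow_mul hx]
  norm_num

-- `σ ↦ sedimentaryKernel σ 1 / (1 + σ) ^ (10/3)` pulled back along `σ = x ^ 3`.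
noncomputable def sedimentaryCubeIntegrand (x : ℝ) : ℝ :=
  3 * x ^ 2 * ((x + 1) ^ 3 * |x - 1|) / (1 + x ^ 3) ^ (10/3 : ℝ)

lemma inv_sq_mul_sedimentaryCubeIntegrand_inv {x : ℝ} (hx : 0 < x) :
    (x ^ 2)⁻¹ * sedimentaryCubeIntegrand x⁻¹ = sedimentaryCubeIntegrand x := by
  have hx10 : (x ^ 3) ^ (10/3 : ℝ) = x ^ 10 := by
    rw [← rpow_natCast, ← rpow_mul hx.le]
    norm_num
  have hsum : 1 + x⁻¹ ^ 3 = (1 + x ^ 3) / x ^ 3 := by field_simp; ring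
  have habs : |x⁻¹ - 1| = |x - 1| / x := by
    rw [show x⁻¹ - 1 = -(x - 1) / x by field_simp; ring, abs_div, abs_neg, abs_of_pos hx]
  unfold sedimentaryCubeIntegrand
  rw [hsum, div_rpow (by positivity) (by positivity), hx10, habs]
  field_simp
  ring

lemma sedimentaryCubeIntegrand_of_le_one {x : ℝ} (hx0 : 0 ≤ x) (hx1 : x ≤ 1) :
    sedimentaryCubeIntegrand x =
      3 * (x ^ 2 * (1 - x) / ((1 - x + x ^ 2) ^ 3 * (1 + x ^ 3) ^ (1/3 : ℝ))) := by
  have hx3 : 0 < 1 + x ^ 3 := by positivity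
  have hq : 0 < 1 - x + x ^ 2 := by nlinarith
  have hsplit : (1 + x ^ 3) ^ (10/3 : ℝ) =
      ((1 + x) * (1 - x + x ^ 2)) ^ 3 * (1 + x ^ 3) ^ (1/3 : ℝ) := by
    rw [show (10/3 : ℝ) = (3 : ℕ) + 1/3 by norm_num, rpow_add hx3, rpow_natCast]
    ring
  unfold sedimentaryCubeIntegrand
  rw [hsplit, abs_of_nonpos (by linarith)]
  field_simp
  ring

lemma continuousOn_sedimentaryCubeIntegrand : ContinuousOn sedimentaryCubeIntegrand (Icc 0 1) := by
  unfold sedimentaryCubeIntegrand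
  refine ContinuousOn.div (by fun_prop) ?_ fun x hx => ?_
  · exact ((continuous_rpow_const (by norm_num)).comp (by fun_prop)).continuousOn
  · have := hx.1
    positivity

lemma integrableOn_and_integral_sedimentaryKernel_one_div :
    IntegrableOn (fun σ => sedimentaryKernel σ 1 / (1 + σ) ^ (10/3 : ℝ)) (Ioi 0) ∧
      ∫ σ in Ioi (0:ℝ), sedimentaryKernel σ 1 / (1 + σ) ^ (10/3 : ℝ) =
        6 * ∫ t in (0:ℝ)..1,
          t ^ 2 * (1 - t) / ((1 - t + t ^ 2) ^ 3 * (1 + t ^ 3) ^ (1/3 : ℝ)) := by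
  set g := fun σ : ℝ => sedimentaryKernel σ 1 / (1 + σ) ^ (10/3 : ℝ)
  have hpull :
      ∀ x ∈ Ioi (0:ℝ), (3 * x ^ ((3:ℝ) - 1)) • g (x ^ (3:ℝ)) = sedimentaryCubeIntegrand x := by
    intro x hx
    rw [show (3:ℝ) - 1 = (2:ℕ) by norm_num, rpow_natCast, show (3:ℝ) = (3:ℕ) by norm_num,
      rpow_natCast, smul_eq_mul]
    simp only [g, sedimentaryKernel_pow_three_one (le_of_lt hx), sedimentaryCubeIntegrand]
    ring
  obtain ⟨hint, hval⟩ := integrableOn_Ioi_and_integral_eq_two_mul_of_inv_symm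
    (continuousOn_sedimentaryCubeIntegrand.integrableOn_Icc.mono_set Ioc_subset_Icc_self)
    (fun x hx => inv_sq_mul_sedimentaryCubeIntegrand_inv hx.1)
  refine ⟨?_, ?_⟩
  · rw [← integrableOn_Ioi_comp_rpow_iff g three_ne_zero, abs_of_pos three_pos]
    exact hint.congr_fun (fun x hx => (hpull x hx).symm) measurableSet_Ioi
  · rw [← integral_comp_rpow_Ioi_of_pos three_pos,
      setIntegral_congr_fun measurableSet_Ioi hpull, hval,
      intervalIntegral.integral_of_le zero_le_one,
      setIntegral_congr_fun measurableSet_Ioc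
        (fun x hx => sedimentaryCubeIntegrand_of_le_one hx.1.le hx.2),
      integral_const_mul]
    ring

/-- Closed form of the sedimentary coagulation double integral:
`∫₀^∞∫₀^∞ (η^{1/3}+η₁^{1/3})³|η^{1/3}−η₁^{1/3}| e^{-η-η₁} dη dη₁
  = 6Γ(10/3) ∫₀¹ t²(1−t)/((1−t+t²)³(1+t³)^{1/3}) dt`. -/
theorem stmt_11 :
    (∫ η₁ in Ioi (0:ℝ), ∫ η in Ioi (0:ℝ),
        (η ^ (1/3 : ℝ) + η₁ ^ (1/3 : ℝ)) ^ 3 * |η ^ (1/3 : ℝ) - η₁ ^ (1/3 : ℝ)| *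
          Real.exp (-η - η₁))
      = 6 * Real.Gamma (10/3) *
          ∫ t in (0:ℝ)..1,
            t ^ 2 * (1 - t) / ((1 - t + t ^ 2) ^ 3 * (1 + t ^ 3) ^ (1/3 : ℝ)) := by
  obtain ⟨hint, hval⟩ := integrableOn_and_integral_sedimentaryKernel_one_div
  have hmeas : Measurable fun σ => sedimentaryKernel σ 1 := by
    unfold sedimentaryKernel
    fun_prop
  have hdeg : (4/3 : ℝ) + 2 = 10/3 := by norm_num
  have h := integral_Ioi_Ioi_mul_exp_of_homogeneous (K := sedimentaryKernel) (d := 4/3)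
    (by norm_num) (fun c hc x hx y hy => sedimentaryKernel_mul_mul hc.le hx.le hy.le) hmeas
    (by rwa [hdeg])
  rw [hdeg, hval] at h
  exact h.trans (by ring)
end

section
/- The closed-form value of the sedimentary-coagulation double integral agrees with 2.58940496 to nine significant digits: |6·Γ(10/3)·∫₀¹ t²(1−t)/((1−t+t²)³(1+t³)^{1/3}) dt − 2.58940496| < 5·10⁻⁹. -/
/-!
Since `1 + t³ = (1 + t)(1 - t + t²)`, the integrand is `t²(1 - t)(1 + t)³(1 + t³)^(-10/3)`,
which has the elementary primitive `(1 + 7t³ + 7t⁴ + t⁷)(1 + t³)^(-7/3) / 14`. Hence the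
integral is `2^(2/3)/7 - 1/14` and, with `Γ(10/3) = (28/27) Γ(1/3)`, the quantity equals
`(4/9) Γ(1/3) (2·2^(2/3) - 1)`.

`Γ(1/3)` is then pinned down to `10⁻¹²` by splitting Euler's integral at `27`: on `(0, 27]`
the Taylor partial sums of `e^(-x)`, which alternate around it, bound the integrand from both
sides and integrate termwise, while the tail over `(27, ∞)` is at most `e^(-27)/9`.
-/

open MeasureTheory Finset Set Real

noncomputable def expNegTaylor (n : ℕ) (x : ℝ) : ℝ :=
  ∑ k ∈ range n, (-x) ^ k / k.factorial

theorem hasDerivAt_expNegTaylor_succ (n : ℕ) (x : ℝ) :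
    HasDerivAt (expNegTaylor (n + 1)) (-expNegTaylor n x) x := by
  have hterm (k : ℕ) : HasDerivAt (fun y : ℝ => (-y) ^ k / k.factorial)
      (k * (-x) ^ (k - 1) * (-1) / k.factorial) x :=
    ((hasDerivAt_neg x).pow k).div_const _
  refine (HasDerivAt.fun_sum fun k _ => hterm k).congr_deriv ?_
  rw [sum_range_succ', expNegTaylor, ← sum_neg_distrib]
  simp only [CharP.cast_eq_zero, zero_mul, zero_div, add_zero]
  refine sum_congr rfl fun k _ => ?_
  push_cast [Nat.factorial_succ]
  field_simp

theorem neg_one_pow_mul_exp_neg_sub_expNegTaylor_nonneg (n : ℕ) {x : ℝ} (hx : 0 ≤ x) :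
    0 ≤ (-1) ^ n * (exp (-x) - expNegTaylor n x) := by
  induction n generalizing x with
  | zero => simp [expNegTaylor, (exp_pos _).le]
  | succ n ih =>
    set g : ℝ → ℝ := fun y => (-1) ^ (n + 1) * (exp (-y) - expNegTaylor (n + 1) y)
    have hg (y : ℝ) : HasDerivAt g ((-1) ^ n * (exp (-y) - expNegTaylor n y)) y := by
      refine (((hasDerivAt_neg y).exp.sub (hasDerivAt_expNegTaylor_succ n y)).const_mul
        ((-1) ^ (n + 1))).congr_deriv ?_
      ring
    have hmono : MonotoneOn g (Ici 0) :=
      monotoneOn_of_hasDerivWithinAt_nonneg (convex_Ici 0)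
        (fun y _ => (hg y).continuousAt.continuousWithinAt)
        (fun y _ => (hg y).hasDerivWithinAt)
        (fun y hy => ih (interior_subset hy))
    have hg0 : g 0 = 0 := by simp [g, expNegTaylor, sum_range_succ']
    simpa [hg0] using hmono self_mem_Ici hx hx

noncomputable def lowerGammaSeries (s a : ℝ) (n : ℕ) : ℝ :=
  ∑ k ∈ range n, (-1) ^ k / k.factorial * (a ^ (k + s) / (k + s))

section LowerGamma

variable {s a : ℝ}

theorem integral_expNegTaylor_mul_rpow (hs : 0 < s) (ha : 0 ≤ a) (n : ℕ) :
    ∫ x in 0..a, expNegTaylor n x * x ^ (s - 1) = lowerGammaSeries s a n := by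
  have hk (k : ℕ) : -1 < (k : ℝ) + s - 1 := by have := k.cast_nonneg (α := ℝ); linarith
  have hpow : ∀ x ∈ uIoc 0 a, expNegTaylor n x * x ^ (s - 1) =
      ∑ k ∈ range n, (-1) ^ k / k.factorial * x ^ ((k : ℝ) + s - 1) := by
    intro x hx
    rw [uIoc_of_le ha] at hx
    rw [expNegTaylor, sum_mul]
    refine sum_congr rfl fun k _ => ?_
    rw [add_sub_assoc, rpow_add hx.1, rpow_natCast, neg_pow]
    ring
  rw [intervalIntegral.integral_congr_ae (ae_of_all _ hpow), intervalIntegral.integral_finsetSum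
    fun k _ => (intervalIntegral.intervalIntegrable_rpow' (hk k)).const_mul _]
  refine sum_congr rfl fun k _ => ?_
  rw [intervalIntegral.integral_const_mul, integral_rpow (Or.inl (hk k)), sub_add_cancel,
    zero_rpow (by linarith [hk k]), sub_zero]

theorem neg_one_pow_mul_integral_sub_lowerGammaSeries_nonneg (hs : 0 < s) (ha : 0 ≤ a) (n : ℕ) :
    0 ≤ (-1) ^ n * ((∫ x in 0..a, exp (-x) * x ^ (s - 1)) - lowerGammaSeries s a n) := by
  have hrpow : IntervalIntegrable (fun x : ℝ => x ^ (s - 1)) volume 0 a :=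
    intervalIntegral.intervalIntegrable_rpow' (by linarith)
  rw [← integral_expNegTaylor_mul_rpow hs ha, ← intervalIntegral.integral_sub
    (hrpow.continuousOn_mul (by fun_prop))
    (hrpow.continuousOn_mul (by unfold expNegTaylor; fun_prop)),
    ← intervalIntegral.integral_const_mul]
  refine intervalIntegral.integral_nonneg ha fun x hx => ?_
  rw [← sub_mul, ← mul_assoc]
  exact mul_nonneg (neg_one_pow_mul_exp_neg_sub_expNegTaylor_nonneg n hx.1) (rpow_nonneg hx.1 _)

theorem Gamma_eq_intervalIntegral_add_integral_Ioi (hs : 0 < s) (ha : 0 ≤ a) :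
    Gamma s = (∫ x in 0..a, exp (-x) * x ^ (s - 1)) + ∫ x in Ioi a, exp (-x) * x ^ (s - 1) := by
  have hconv := GammaIntegral_convergent hs
  rw [Gamma_eq_integral hs, intervalIntegral.integral_interval_add_Ioi hconv
    (hconv.mono_set (Ioi_subset_Ioi ha))]

theorem integral_Ioi_exp_neg_mul_rpow_nonneg (ha : 0 ≤ a) :
    0 ≤ ∫ x in Ioi a, exp (-x) * x ^ (s - 1) :=
  setIntegral_nonneg measurableSet_Ioi fun _ hx =>
    mul_nonneg (exp_pos _).le (rpow_nonneg (ha.trans hx.le) _)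

theorem integral_Ioi_exp_neg_mul_rpow_le (hs : 0 < s) (hs₁ : s ≤ 1) (ha : 0 < a) :
    ∫ x in Ioi a, exp (-x) * x ^ (s - 1) ≤ exp (-a) * a ^ (s - 1) := by
  calc ∫ x in Ioi a, exp (-x) * x ^ (s - 1)
      ≤ ∫ x in Ioi a, exp (-x) * a ^ (s - 1) := by
        refine setIntegral_mono_on ((GammaIntegral_convergent hs).mono_set (Ioi_subset_Ioi ha.le))
          ((integrableOn_exp_neg_Ioi a).mul_const _) measurableSet_Ioi fun x hx => ?_
        exact mul_le_mul_of_nonneg_left (rpow_le_rpow_of_nonpos ha (le_of_lt hx) (by linarith))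
          (exp_pos _).le
    _ = exp (-a) * a ^ (s - 1) := by rw [integral_mul_const, integral_exp_neg_Ioi]

theorem lowerGammaSeries_le_Gamma (hs : 0 < s) (ha : 0 ≤ a) {n : ℕ} (hn : Even n) :
    lowerGammaSeries s a n ≤ Gamma s := by
  have := neg_one_pow_mul_integral_sub_lowerGammaSeries_nonneg hs ha n
  rw [hn.neg_one_pow, one_mul] at this
  linarith [Gamma_eq_intervalIntegral_add_integral_Ioi hs ha,
    integral_Ioi_exp_neg_mul_rpow_nonneg (s := s) ha]

theorem Gamma_le_lowerGammaSeries_add (hs : 0 < s) (hs₁ : s ≤ 1) (ha : 0 < a) {n : ℕ}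
    (hn : Odd n) : Gamma s ≤ lowerGammaSeries s a n + exp (-a) * a ^ (s - 1) := by
  have := neg_one_pow_mul_integral_sub_lowerGammaSeries_nonneg hs ha.le n
  rw [hn.neg_one_pow, neg_one_mul] at this
  linarith [Gamma_eq_intervalIntegral_add_integral_Ioi hs ha.le,
    integral_Ioi_exp_neg_mul_rpow_le hs hs₁ ha]

end LowerGamma

theorem lowerGammaSeries_one_third_twentyseven (n : ℕ) :
    lowerGammaSeries (1 / 3) 27 n =
      ∑ k ∈ range n, (-1 : ℝ) ^ k / k.factorial * (27 ^ k * 3 / (k + 1 / 3)) := by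
  refine sum_congr rfl fun k _ => ?_
  have h27 : (27 : ℝ) ^ (1 / 3 : ℝ) = 3 := by
    rw [show (27 : ℝ) = 3 ^ (3 : ℝ) by norm_num, ← rpow_mul (by norm_num)]
    norm_num
  rw [rpow_add (by norm_num), rpow_natCast, h27]

theorem Gamma_one_third_bounds :
    2.678938534707 < Gamma (1 / 3) ∧ Gamma (1 / 3) < 2.678938534708 := by
  have hlower := lowerGammaSeries_le_Gamma (a := 27) (s := 1 / 3) (by norm_num) (by norm_num)
    (show Even 100 by decide)
  have hupper := Gamma_le_lowerGammaSeries_add (a := 27) (s := 1 / 3) (by norm_num) (by norm_num)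
    (by norm_num) (show Odd 101 by decide)
  have htail : exp (-27) * (27 : ℝ) ^ (1 / 3 - 1 : ℝ) < 0.3678794412 ^ 27 / 9 := by
    have h27 : (27 : ℝ) ^ (1 / 3 - 1 : ℝ) = 1 / 9 := by
      rw [show (27 : ℝ) = 3 ^ (3 : ℝ) by norm_num, ← rpow_mul (by norm_num)]
      norm_num
    rw [h27, show (-27 : ℝ) = (27 : ℕ) * -1 by norm_num, exp_nat_mul]
    have := pow_lt_pow_left₀ exp_neg_one_lt_d9 (exp_pos _).le (by norm_num : (27 : ℕ) ≠ 0)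
    linarith
  rw [lowerGammaSeries_one_third_twentyseven] at hlower hupper
  constructor
  · refine lt_of_lt_of_le ?_ hlower
    norm_num [sum_range_succ, Nat.factorial]
  · refine hupper.trans_lt (lt_of_lt_of_le (add_lt_add_right htail _) ?_)
    norm_num [sum_range_succ, Nat.factorial]

noncomputable def sedimentationPrimitive (t : ℝ) : ℝ :=
  (1 + 7 * t ^ 3 + 7 * t ^ 4 + t ^ 7) * (1 + t ^ 3) ^ (-7 / 3 : ℝ) / 14

theorem hasDerivAt_sedimentationPrimitive {t : ℝ} (ht : 0 < 1 + t ^ 3) :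
    HasDerivAt sedimentationPrimitive
      (t ^ 2 * (1 - t) * (1 + t) ^ 3 * (1 + t ^ 3) ^ (-10 / 3 : ℝ)) t := by
  have hp : HasDerivAt (fun t : ℝ => 1 + 7 * t ^ 3 + 7 * t ^ 4 + t ^ 7)
      (21 * t ^ 2 + 28 * t ^ 3 + 7 * t ^ 6) t := by
    refine ((((hasDerivAt_pow 3 t).const_mul 7).const_add 1).add
      ((hasDerivAt_pow 4 t).const_mul 7)).add (hasDerivAt_pow 7 t) |>.congr_deriv ?_
    push_cast; ring
  have hq : HasDerivAt (fun t : ℝ => (1 + t ^ 3) ^ (-7 / 3 : ℝ))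
      (3 * t ^ 2 * (-7 / 3) * (1 + t ^ 3) ^ (-7 / 3 - 1 : ℝ)) t := by
    convert ((hasDerivAt_pow 3 t).const_add 1).rpow_const (p := -7 / 3) (Or.inl ht.ne') using 1
    push_cast; ring
  refine ((hp.mul hq).div_const 14).congr_deriv ?_
  have hsplit : (1 + t ^ 3) ^ (-7 / 3 : ℝ) = (1 + t ^ 3) * (1 + t ^ 3) ^ (-10 / 3 : ℝ) := by
    rw [← rpow_one_add' ht.le (by norm_num)]
    norm_num
  rw [hsplit, show (-7 / 3 - 1 : ℝ) = -10 / 3 by norm_num]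
  ring

theorem sedimentation_integrand_eq {t : ℝ} (ht : 0 < 1 + t) :
    t ^ 2 * (1 - t) / ((1 - t + t ^ 2) ^ 3 * (1 + t ^ 3) ^ (1 / 3 : ℝ)) =
      t ^ 2 * (1 - t) * (1 + t) ^ 3 * (1 + t ^ 3) ^ (-10 / 3 : ℝ) := by
  have hcube : 1 + t ^ 3 = (1 + t) * (1 - t + t ^ 2) := by ring
  have hq : 0 < 1 - t + t ^ 2 := by nlinarith [sq_nonneg (2 * t - 1)]
  have hA : 0 < 1 + t ^ 3 := hcube ▸ mul_pos ht hq
  have hpow :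
      (1 + t ^ 3) ^ (-10 / 3 : ℝ) = ((1 + t ^ 3) ^ 3 * (1 + t ^ 3) ^ (1 / 3 : ℝ))⁻¹ := by
    rw [← rpow_natCast (1 + t ^ 3) 3, ← rpow_add hA, ← rpow_neg hA.le]
    norm_num
  rw [hpow, hcube]
  field_simp

theorem integral_sedimentation_integrand :
    ∫ t in (0 : ℝ)..1, t ^ 2 * (1 - t) / ((1 - t + t ^ 2) ^ 3 * (1 + t ^ 3) ^ (1 / 3 : ℝ)) =
      2 ^ (2 / 3 : ℝ) / 7 - 1 / 14 := by
  have hmem {t : ℝ} (ht : t ∈ Set.uIcc 0 1) : 0 ≤ t := by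
    rw [Set.uIcc_of_le zero_le_one] at ht; exact ht.1
  have hpos {t : ℝ} (ht : 0 ≤ t) : 0 < 1 + t ^ 3 := by positivity
  rw [intervalIntegral.integral_congr
      fun t ht => sedimentation_integrand_eq (by linarith [hmem ht]),
    intervalIntegral.integral_eq_sub_of_hasDerivAt
      (fun t ht => hasDerivAt_sedimentationPrimitive (hpos (hmem ht)))
      (ContinuousOn.intervalIntegrable (by
        refine ContinuousOn.mul (by fun_prop) (ContinuousOn.rpow_const (by fun_prop) ?_)
        exact fun t ht => Or.inl (hpos (hmem ht)).ne'))]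
  have h2 : (2 : ℝ) ^ (-(7 / 3) : ℝ) = 2 ^ (2 / 3 : ℝ) / 8 := by
    rw [show (-(7 / 3) : ℝ) = 2 / 3 - (3 : ℕ) by norm_num, rpow_sub_natCast (by norm_num)]
    norm_num
  simp only [sedimentationPrimitive]
  norm_num
  rw [h2]
  ring

theorem Gamma_ten_thirds : Gamma (10 / 3) = 28 / 27 * Gamma (1 / 3) := by
  rw [show (10 / 3 : ℝ) = 1 / 3 + 1 + 1 + 1 by norm_num, Gamma_add_one (by norm_num),
    Gamma_add_one (by norm_num), Gamma_add_one (by norm_num)]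
  ring

theorem two_rpow_two_thirds_bounds :
    1.587401051 < (2 : ℝ) ^ (2 / 3 : ℝ) ∧ (2 : ℝ) ^ (2 / 3 : ℝ) < 1.587401052 := by
  have hcube : ((2 : ℝ) ^ (2 / 3 : ℝ)) ^ 3 = 4 := by
    rw [← rpow_natCast, ← rpow_mul zero_le_two]
    norm_num
  constructor
  · exact lt_of_pow_lt_pow_left₀ 3 (by positivity) (by rw [hcube]; norm_num)
  · exact lt_of_pow_lt_pow_left₀ 3 (by norm_num) (by rw [hcube]; norm_num)

/-- The sedimentary-coagulation value
`6Γ(10/3) ∫₀¹ t²(1−t)/((1−t+t²)³(1+t³)^{1/3}) dt` agrees with `2.58940496`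
to nine significant digits. -/
theorem stmt_18 :
    |6 * Real.Gamma (10/3) *
        (∫ t in (0:ℝ)..1,
          t ^ 2 * (1 - t) / ((1 - t + t ^ 2) ^ 3 * (1 + t ^ 3) ^ (1/3 : ℝ)))
      - 2.58940496| < 5e-9 := by
  rw [integral_sedimentation_integrand, Gamma_ten_thirds]
  obtain ⟨hG₁, hG₂⟩ := Gamma_one_third_bounds
  obtain ⟨hY₁, hY₂⟩ := two_rpow_two_thirds_bounds
  rw [abs_lt]
  constructor <;> nlinarith [mul_lt_mul'' hG₁ hY₁ (by norm_num) (by norm_num),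
    mul_lt_mul'' hG₂ hY₂ (by linarith) (by linarith)]
end
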